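/- arXiv:2402.12872 — 2 statements merged into one kernel-verified Lean document; each statement's English description precedes it below -/
import Mathlib

section
/- Let D ∈ ℝ^{m×n}, K ∈ ℝ^{p×n} with N(K) ∩ N(D) = {0}, μ, β > 0, M = DᵀD + (μ/β)KᵀK, and G = D M⁻¹ Dᵀ. Then G is symmetric positive semi-definite and its spectral radius satisfies ρ(G) ≤ 1. -/
open Matrix

noncomputable def specRad {n : ℕ} (A : Matrix (Fin n) (Fin n) ℝ) : ℝ :=
  sSup (abs '' spectrum ℝ A)

namespace Matrix

variable {m n p : Type*} [Fintype m] [Fintype n] [Fintype p]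

lemma dotProduct_self_nonneg {R : Type*} [Ring R] [LinearOrder R] [IsStrictOrderedRing R]
    (v : n → R) : 0 ≤ v ⬝ᵥ v :=
  Finset.sum_nonneg fun i _ => mul_self_nonneg (v i)

lemma dotProduct_transpose_mul_self_mulVec (D : Matrix m n ℝ) (x : n → ℝ) :
    x ⬝ᵥ (Dᵀ * D) *ᵥ x = D *ᵥ x ⬝ᵥ D *ᵥ x := by
  rw [← mulVec_mulVec, dotProduct_mulVec, vecMul_transpose]

lemma dotProduct_transpose_mul_add_smul_mulVec (D : Matrix m n ℝ) (K : Matrix p n ℝ) (c : ℝ)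
    (x : n → ℝ) :
    x ⬝ᵥ (Dᵀ * D + c • (Kᵀ * K)) *ᵥ x = D *ᵥ x ⬝ᵥ D *ᵥ x + c * (K *ᵥ x ⬝ᵥ K *ᵥ x) := by
  rw [add_mulVec, dotProduct_add, smul_mulVec, dotProduct_smul, smul_eq_mul,
    dotProduct_transpose_mul_self_mulVec, dotProduct_transpose_mul_self_mulVec]

lemma posDef_transpose_mul_add_smul (D : Matrix m n ℝ) (K : Matrix p n ℝ) {c : ℝ} (hc : 0 < c)
    (hker : ∀ x : n → ℝ, K *ᵥ x = 0 → D *ᵥ x = 0 → x = 0) :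
    (Dᵀ * D + c • (Kᵀ * K)).PosDef := by
  have hpsd : (Dᵀ * D + c • (Kᵀ * K)).PosSemidef := by
    simp only [← conjTranspose_eq_transpose_of_trivial]
    exact (posSemidef_conjTranspose_mul_self D).add
      ((posSemidef_conjTranspose_mul_self K).smul hc.le)
  refine .of_dotProduct_mulVec_pos hpsd.isHermitian fun x hx => ?_
  rw [star_trivial, dotProduct_transpose_mul_add_smul_mulVec]
  have hD := dotProduct_self_nonneg (D *ᵥ x)
  have hK := dotProduct_self_nonneg (K *ᵥ x)
  by_contra! hle
  refine hx (hker x (dotProduct_self_eq_zero.mp ?_) (dotProduct_self_eq_zero.mp ?_))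
  · nlinarith
  · nlinarith

/-- With `z = M⁻¹ Dᵀ y` one has `yᵀ D M⁻¹ Dᵀ y = yᵀ D z = zᵀ M z ≥ |D z|²`, hence
`0 ≤ |y - D z|² ≤ |y|² - yᵀ D M⁻¹ Dᵀ y`. -/
theorem dotProduct_mul_inv_mul_transpose_mulVec_le [DecidableEq n] {M : Matrix n n ℝ}
    (hM : IsUnit M.det) (D : Matrix m n ℝ) (hDM : ∀ z, D *ᵥ z ⬝ᵥ D *ᵥ z ≤ z ⬝ᵥ M *ᵥ z)
    (y : m → ℝ) :
    y ⬝ᵥ (D * M⁻¹ * Dᵀ) *ᵥ y ≤ y ⬝ᵥ y := by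
  set z := M⁻¹ *ᵥ Dᵀ *ᵥ y
  have hGy : (D * M⁻¹ * Dᵀ) *ᵥ y = D *ᵥ z := by
    simp only [z, mulVec_mulVec, Matrix.mul_assoc]
  have hMz : M *ᵥ z = Dᵀ *ᵥ y := by
    simp only [z, mulVec_mulVec, ← Matrix.mul_assoc, mul_nonsing_inv _ hM, Matrix.one_mul]
  have hform : y ⬝ᵥ D *ᵥ z = z ⬝ᵥ M *ᵥ z := by
    rw [dotProduct_mulVec, ← mulVec_transpose, ← hMz, dotProduct_comm]
  have hsq : 0 ≤ (y - D *ᵥ z) ⬝ᵥ (y - D *ᵥ z) := dotProduct_self_nonneg _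
  rw [sub_dotProduct, dotProduct_sub, dotProduct_sub, dotProduct_comm (D *ᵥ z) y] at hsq
  rw [hGy]
  linarith [hDM z]

lemma posSemidef_one_sub [DecidableEq m] {A : Matrix m m ℝ} (hA : A.IsHermitian)
    (hle : ∀ y, y ⬝ᵥ A *ᵥ y ≤ y ⬝ᵥ y) : (1 - A).PosSemidef := by
  refine .of_dotProduct_mulVec_nonneg (isHermitian_one.sub hA) fun y => ?_
  rw [star_trivial, sub_mulVec, one_mulVec, dotProduct_sub, sub_nonneg]
  exact hle y

lemma spectrum_subset_Icc_zero_one [DecidableEq m] {A : Matrix m m ℝ} (hA : A.PosSemidef)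
    (hA1 : (1 - A).PosSemidef) : spectrum ℝ A ⊆ Set.Icc 0 1 := by
  intro r hr
  have hr1 : 1 - r ∈ spectrum ℝ (1 - A) := by
    rw [← map_one (algebraMap ℝ (Matrix m m ℝ)), ← spectrum.singleton_sub_eq]
    exact Set.sub_mem_sub rfl hr
  exact ⟨(posSemidef_iff_isHermitian_and_spectrum_nonneg.mp hA).2 hr,
    sub_nonneg.mp ((posSemidef_iff_isHermitian_and_spectrum_nonneg.mp hA1).2 hr1)⟩

end Matrix

lemma specRad_le_one_of_spectrum_subset {n : ℕ} {A : Matrix (Fin n) (Fin n) ℝ}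
    (h : spectrum ℝ A ⊆ Set.Icc 0 1) : specRad A ≤ 1 := by
  refine Real.sSup_le ?_ zero_le_one
  rintro _ ⟨r, hr, rfl⟩
  exact abs_le.mpr ⟨by linarith [(h hr).1], (h hr).2⟩

theorem G_symm_psd_specRad_le_one {m n p : ℕ}
    (D : Matrix (Fin m) (Fin n) ℝ) (K : Matrix (Fin p) (Fin n) ℝ)
    (μ β : ℝ) (hμ : 0 < μ) (hβ : 0 < β)
    (hnull : ∀ x : Fin n → ℝ, K.mulVec x = 0 → D.mulVec x = 0 → x = 0) :
    let M := Dᵀ * D + (μ / β) • (Kᵀ * K)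
    let G := D * M⁻¹ * Dᵀ
    G.IsSymm ∧ G.PosSemidef ∧ specRad G ≤ 1 := by
  intro M G
  have hc : 0 < μ / β := div_pos hμ hβ
  have hM : M.PosDef := posDef_transpose_mul_add_smul D K hc hnull
  have hG : G.PosSemidef := hM.posSemidef.inv.mul_mul_conjTranspose_same D
  have hDM : ∀ z, D *ᵥ z ⬝ᵥ D *ᵥ z ≤ z ⬝ᵥ M *ᵥ z := fun z => by
    rw [dotProduct_transpose_mul_add_smul_mulVec]
    exact le_add_of_nonneg_right (mul_nonneg hc.le (dotProduct_self_nonneg _))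
  have hG1 : (1 - G).PosSemidef := posSemidef_one_sub hG.isHermitian
    (dotProduct_mul_inv_mul_transpose_mulVec_le ((isUnit_iff_isUnit_det M).mp hM.isUnit) D hDM)
  exact ⟨hG.isHermitian, hG, specRad_le_one_of_spectrum_subset
    (spectrum_subset_Icc_zero_one hG hG1)⟩
end

section
/- With M = DᵀD + (μ/β)KᵀK positive definite and G = D M⁻¹ Dᵀ, the affine map h(w) = D M⁻¹ (Dᵀ w + (μ/β) Kᵀ y) is nonexpansive in the Euclidean norm: ‖h(w) − h(w̃)‖₂ ≤ ‖w − w̃‖₂ for all w, w̃. -/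
open Matrix

noncomputable def enormFin {n : ℕ} (x : Fin n → ℝ) : ℝ := Real.sqrt (∑ i, (x i) ^ 2)

/-!
Write `M = DᵀD + N` with `N = (μ/β) KᵀK` positive semidefinite, `v = w - w'`, `u = M⁻¹Dᵀv`
and `g = Du = h w - h w'`. Then `⟪v, g⟫ = ⟪Dᵀv, u⟫ = ⟪Mu, u⟫ = ‖g‖² + ⟪Nu, u⟫ ≥ ‖g‖²`,
so Cauchy–Schwarz gives `‖g‖² ≤ ‖v‖ ‖g‖`, i.e. `‖g‖ ≤ ‖v‖`. When `M` is singular, Lean's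
`M⁻¹ = 0` makes `h` constant.
-/

theorem enormFin_eq_norm_toLp {n : ℕ} (x : Fin n → ℝ) :
    enormFin x = ‖(WithLp.toLp 2 x : EuclideanSpace ℝ (Fin n))‖ := by
  rw [enormFin, ← EuclideanSpace.real_norm_sq_eq, Real.sqrt_sq (norm_nonneg _)]

theorem norm_le_of_norm_sq_le_inner {E : Type*} [NormedAddCommGroup E] [InnerProductSpace ℝ E]
    {x v : E} (h : ‖x‖ ^ 2 ≤ inner ℝ v x) : ‖x‖ ≤ ‖v‖ := by
  nlinarith [real_inner_le_norm v x, norm_nonneg x, norm_nonneg v]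

namespace Matrix

variable {ι κ : Type*} [Fintype ι] [Fintype κ]

theorem mulVec_dotProduct_mulVec_self_le_of_mulVec_eq (D : Matrix κ ι ℝ) {N : Matrix ι ι ℝ}
    (hN : N.PosSemidef) {u : ι → ℝ} {v : κ → ℝ} (hu : (Dᵀ * D + N) *ᵥ u = Dᵀ *ᵥ v) :
    D *ᵥ u ⬝ᵥ D *ᵥ u ≤ v ⬝ᵥ D *ᵥ u :=
  calc D *ᵥ u ⬝ᵥ D *ᵥ u ≤ D *ᵥ u ⬝ᵥ D *ᵥ u + u ⬝ᵥ N *ᵥ u :=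
        le_add_of_nonneg_right (by simpa using hN.dotProduct_mulVec_nonneg u)
    _ = u ⬝ᵥ (Dᵀ * D + N) *ᵥ u := by
        rw [add_mulVec, dotProduct_add, ← mulVec_mulVec, dotProduct_mulVec u Dᵀ, vecMul_transpose]
    _ = v ⬝ᵥ D *ᵥ u := by
        rw [hu, dotProduct_mulVec, vecMul_transpose, dotProduct_comm]

variable [DecidableEq ι]

theorem dotProduct_self_le_of_posSemidef (D : Matrix κ ι ℝ) {N : Matrix ι ι ℝ}
    (hN : N.PosSemidef) (v : κ → ℝ) :
    (D * (Dᵀ * D + N)⁻¹ * Dᵀ) *ᵥ v ⬝ᵥ (D * (Dᵀ * D + N)⁻¹ * Dᵀ) *ᵥ v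
      ≤ v ⬝ᵥ (D * (Dᵀ * D + N)⁻¹ * Dᵀ) *ᵥ v := by
  by_cases hA : IsUnit (Dᵀ * D + N).det
  · simp only [← mulVec_mulVec]
    apply mulVec_dotProduct_mulVec_self_le_of_mulVec_eq D hN
    rw [mulVec_mulVec, mul_nonsing_inv _ hA, one_mulVec]
  · rw [nonsing_inv_apply_not_isUnit _ hA]
    simp

end Matrix

theorem enormFin_mulVec_le_of_posSemidef {m n : ℕ} (D : Matrix (Fin m) (Fin n) ℝ)
    {N : Matrix (Fin n) (Fin n) ℝ} (hN : N.PosSemidef) (v : Fin m → ℝ) :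
    enormFin ((D * (Dᵀ * D + N)⁻¹ * Dᵀ) *ᵥ v) ≤ enormFin v := by
  rw [enormFin_eq_norm_toLp, enormFin_eq_norm_toLp]
  apply norm_le_of_norm_sq_le_inner
  rw [← real_inner_self_eq_norm_sq]
  simpa only [EuclideanSpace.inner_toLp_toLp, star_trivial, dotProduct_comm v] using
    dotProduct_self_le_of_posSemidef D hN v

theorem h_nonexpansive_general {m n p : ℕ}
    (D : Matrix (Fin m) (Fin n) ℝ) (K : Matrix (Fin p) (Fin n) ℝ)
    (μ β : ℝ) (hμ : 0 < μ) (hβ : 0 < β) (y : Fin p → ℝ) :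
    let M := Dᵀ * D + (μ / β) • (Kᵀ * K)
    let h : (Fin m → ℝ) → (Fin m → ℝ) :=
      fun w => (D * M⁻¹).mulVec (Dᵀ.mulVec w + (μ / β) • Kᵀ.mulVec y)
    ∀ w w' : Fin m → ℝ, enormFin (h w - h w') ≤ enormFin (w - w') := by
  intro M h w w'
  have hKK : (Kᵀ * K).PosSemidef :=
    conjTranspose_eq_transpose_of_trivial K ▸ posSemidef_conjTranspose_mul_self K
  have hN : ((μ / β) • (Kᵀ * K)).PosSemidef := hKK.smul (div_pos hμ hβ).le
  have hdiff : h w - h w' = (D * M⁻¹ * Dᵀ) *ᵥ (w - w') := by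
    rw [← mulVec_mulVec, mulVec_sub, mulVec_sub]
    simp only [h, mulVec_add]
    abel
  rw [hdiff]
  exact enormFin_mulVec_le_of_posSemidef D hN (w - w')

theorem h_nonexpansive {m n p : ℕ}
    (D : Matrix (Fin m) (Fin n) ℝ) (K : Matrix (Fin p) (Fin n) ℝ)
    (μ β : ℝ) (hμ : 0 < μ) (hβ : 0 < β) (y : Fin p → ℝ)
    (hnull : ∀ x : Fin n → ℝ, K.mulVec x = 0 → D.mulVec x = 0 → x = 0) :
    let M := Dᵀ * D + (μ / β) • (Kᵀ * K)
    let h : (Fin m → ℝ) → (Fin m → ℝ) :=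
      fun w => (D * M⁻¹).mulVec (Dᵀ.mulVec w + (μ / β) • Kᵀ.mulVec y)
    ∀ w w' : Fin m → ℝ, enormFin (h w - h w') ≤ enormFin (w - w') :=
  h_nonexpansive_general D K μ β hμ hβ y
end
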